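/- (Exponential generating function of the Bell numbers, equation (gf_Bell_numbers)) For every real number z, the series ∑_{k=0}^{∞} (B_k / k!) · z^k converges and its sum equals exp(exp(z) − 1). -/

import Mathlib

/-- The Bell number `B_k`: the number of partitions of a `k`-element set. -/
def bellNumber (k : ℕ) : ℕ :=
  Fintype.card (Finpartition (Finset.univ : Finset (Fin k)))

/-!
Counting the maps `Fin k → Fin n` by the partition of `Fin k` into their fibres gives
`n ^ k = ∑_P n (n - 1) ⋯ (n - |P| + 1)`; dividing by `n!` and summing over `n` yields Dobinski's
formula `∑_n n ^ k / n! = e B_k`. Hence `e ∑_k B_k z ^ k / k!` is the double series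
`∑_{n,k} (n z) ^ k / (n! k!)`, which converges absolutely; summing it over `k` first gives
`∑_n e ^ {n z} / n! = e ^ {e ^ z}`.
-/

open Finset Real
open scoped Nat

instance Setoid.decidableRelKer {α β : Type*} [DecidableEq β] (f : α → β) :
    DecidableRel (Setoid.ker f).r :=
  fun a b => decEq (f a) (f b)

namespace Finpartition

variable {α β : Type*} [DecidableEq α]

lemma parts_eq_image_part {s : Finset α} (P : Finpartition s) : P.parts = s.image P.part := by
  ext t
  simp only [mem_image]
  refine ⟨fun ht => ?_, ?_⟩
  · obtain ⟨a, ha⟩ := P.nonempty_of_mem_parts ht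
    exact ⟨a, P.le ht ha, P.part_eq_of_mem ht ha⟩
  · rintro ⟨a, ha, rfl⟩
    exact P.part_mem.2 ha

lemma ext_part {s : Finset α} {P Q : Finpartition s} (h : ∀ a ∈ s, P.part a = Q.part a) :
    P = Q := by
  ext1
  rw [parts_eq_image_part, parts_eq_image_part]
  exact image_congr h

variable [Fintype α]

def fibers [DecidableEq β] (f : α → β) : Finpartition (univ : Finset α) :=
  ofSetoid (Setoid.ker f)

lemma mem_part_fibers [DecidableEq β] {f : α → β} {a b : α} :
    b ∈ (fibers f).part a ↔ f a = f b :=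
  mem_part_ofSetoid_iff_rel

variable (P : Finpartition (univ : Finset α))

def liftParts (g : P.parts → β) (a : α) : β :=
  g ⟨P.part a, P.part_mem.2 (mem_univ a)⟩

lemma liftParts_apply_of_mem (g : P.parts → β) {t : Finset α} (ht : t ∈ P.parts) {a : α}
    (hat : a ∈ t) : P.liftParts g a = g ⟨t, ht⟩ := by
  rw [liftParts]
  congr
  exact P.part_eq_of_mem ht hat

lemma fibers_liftParts [DecidableEq β] (g : P.parts ↪ β) : fibers (P.liftParts g) = P := by
  refine ext_part fun a _ => ?_
  ext b
  rw [mem_part_fibers, liftParts, liftParts, g.apply_eq_iff_eq, Subtype.mk.injEq, eq_comm,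
    ← P.mem_part_iff_part_eq_part (mem_univ b) (mem_univ a)]

variable (α β) in
lemma bijective_liftParts [DecidableEq β] :
    Function.Bijective fun x : Σ P : Finpartition (univ : Finset α), (P.parts ↪ β) =>
      x.1.liftParts x.2 := by
  constructor
  · rintro ⟨P, g⟩ ⟨Q, h⟩ hgh
    obtain rfl : P = Q := by
      simpa only [fibers_liftParts] using congrArg fibers hgh
    congr
    ext ⟨t, ht⟩
    obtain ⟨a, hat⟩ := P.nonempty_of_mem_parts ht
    simpa only [P.liftParts_apply_of_mem _ ht hat] using congrFun hgh a
  · intro f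
    set P := fibers f
    let rep (t : P.parts) : α := (P.nonempty_of_mem_parts t.2).choose
    have rep_mem (t : P.parts) : rep t ∈ (t : Finset α) :=
      (P.nonempty_of_mem_parts t.2).choose_spec
    have f_rep {t : P.parts} {a : α} (hat : a ∈ (t : Finset α)) : f (rep t) = f a := by
      rw [← mem_part_fibers, P.part_eq_of_mem t.2 (rep_mem t)]
      exact hat
    refine ⟨⟨P, ⟨fun t => f (rep t), fun t u htu => ?_⟩⟩, funext fun a => ?_⟩
    · have : rep u ∈ P.part (rep t) := mem_part_fibers.2 htu
      rw [P.part_eq_of_mem t.2 (rep_mem t)] at this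
      exact Subtype.ext (P.eq_of_mem_parts t.2 u.2 this (rep_mem u))
    · exact f_rep (P.mem_part (mem_univ a))

theorem card_pow_card_eq_sum_descFactorial [DecidableEq β] [Fintype β] :
    Fintype.card β ^ Fintype.card α =
      ∑ P : Finpartition (univ : Finset α), (Fintype.card β).descFactorial #P.parts := by
  rw [← Fintype.card_fun, ← Fintype.card_congr (Equiv.ofBijective _ (bijective_liftParts α β)),
    Fintype.card_sigma]
  simp only [Fintype.card_embedding_eq, Fintype.card_coe]

end Finpartition

theorem Nat.pow_eq_sum_descFactorial (n k : ℕ) :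
    n ^ k = ∑ P : Finpartition (univ : Finset (Fin k)), n.descFactorial #P.parts := by
  simpa using Finpartition.card_pow_card_eq_sum_descFactorial (α := Fin k) (β := Fin n)

lemma Real.hasSum_pow_div_factorial (x : ℝ) : HasSum (fun n : ℕ => x ^ n / n !) (exp x) := by
  rw [exp_eq_exp_ℝ]
  exact NormedSpace.expSeries_div_hasSum_exp x

lemma hasSum_descFactorial_div_factorial (c : ℕ) :
    HasSum (fun n : ℕ => (n.descFactorial c : ℝ) / n !) (exp 1) := by
  rw [← hasSum_nat_add_iff' c]
  have shifted (m : ℕ) : ((m + c).descFactorial c : ℝ) / (m + c)! = 1 ^ m / m ! := by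
    have h := Nat.factorial_mul_descFactorial (Nat.le_add_left c m)
    rw [Nat.add_sub_cancel] at h
    rw [one_pow, div_eq_div_iff (by positivity) (by positivity), ← h]
    push_cast
    ring
  have vanish : ∀ i ∈ range c, (i.descFactorial c : ℝ) / i ! = 0 := fun i hi => by
    rw [Nat.descFactorial_of_lt (mem_range.1 hi), Nat.cast_zero, zero_div]
  simpa only [shifted, sum_congr rfl vanish, sum_const_zero, sub_zero]
    using hasSum_pow_div_factorial 1

lemma hasSum_exp_natCast_mul_div_factorial (z : ℝ) :
    HasSum (fun n : ℕ => exp (n * z) / n !) (exp (exp z)) := by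
  simpa only [exp_nat_mul] using hasSum_pow_div_factorial (exp z)

lemma hasSum_pow_div_factorial_mul_factorial (z : ℝ) :
    HasSum (fun p : ℕ × ℕ => (p.1 * z) ^ p.2 / (p.1 ! * p.2 !)) (exp (exp z)) := by
  have rows (z : ℝ) (n : ℕ) :
      HasSum (fun k : ℕ => (n * z) ^ k / (n ! * k !)) (exp (n * z) / n !) := by
    simpa only [div_div, mul_comm _ (n ! : ℝ)] using
      (hasSum_pow_div_factorial (n * z)).div_const (n ! : ℝ)
  have summable : Summable fun p : ℕ × ℕ => (p.1 * z) ^ p.2 / (p.1 ! * p.2 !) := by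
    refine Summable.of_norm ?_
    have norm_eq (p : ℕ × ℕ) :
        ‖(p.1 * z) ^ p.2 / (p.1 ! * p.2 !)‖ = (p.1 * |z|) ^ p.2 / (p.1 ! * p.2 !) := by
      simp only [norm_div, norm_pow, norm_mul, Real.norm_eq_abs, Nat.abs_cast]
    simp only [norm_eq]
    refine (summable_prod_of_nonneg fun p => by positivity).2
      ⟨fun n => (rows |z| n).summable, ?_⟩
    simpa only [fun n => (rows |z| n).tsum_eq] using
      (hasSum_exp_natCast_mul_div_factorial |z|).summable
  obtain ⟨S, hS⟩ := summable
  rwa [(hS.prod_fiberwise (rows z)).unique (hasSum_exp_natCast_mul_div_factorial z)] at hS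

lemma dobinski_hasSum (k : ℕ) :
    HasSum (fun n : ℕ => (n : ℝ) ^ k / n !) (exp 1 * bellNumber k) := by
  have h := hasSum_sum (s := univ) fun (P : Finpartition (univ : Finset (Fin k))) _ =>
    hasSum_descFactorial_div_factorial #P.parts
  simp only [← sum_div, ← Nat.cast_sum, ← Nat.pow_eq_sum_descFactorial, sum_const,
    nsmul_eq_mul] at h
  rw [bellNumber, mul_comm]
  exact_mod_cast h

/-- exponential generating function of the Bell numbers: for every real `z`,
the series `∑_{k=0}^∞ (B_k / k!) z^k` converges to `exp(exp z − 1)`. -/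
theorem bell_exponential_generating_function (z : ℝ) :
    HasSum (fun k : ℕ => (bellNumber k : ℝ) / k.factorial * z ^ k)
      (Real.exp (Real.exp z - 1)) := by
  have columns (k : ℕ) : HasSum (fun n : ℕ => (n * z) ^ k / (n ! * k !))
      (exp 1 * bellNumber k * (z ^ k / k !)) := by
    refine ((dobinski_hasSum k).mul_right (z ^ k / k !)).congr_fun fun n => ?_
    rw [mul_pow, div_mul_div_comm]
  have h := ((Equiv.prodComm ℕ ℕ).hasSum_iff.2
    (hasSum_pow_div_factorial_mul_factorial z)).prod_fiberwise columns
  rw [exp_sub]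
  refine (h.div_const (exp 1)).congr_fun fun k => ?_
  field_simp
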